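/- arXiv:2105.00436 — 7 statements merged into one kernel-verified Lean document; each statement's English description precedes it below -/
import Mathlib

section
/- The set C_ℓ = A_ℓ ∪ B_ℓ, where B_ℓ = {ab^m a : 1 ≤ m ≤ ℓ} and A_ℓ = {ab^m a a a b^n a : 1 ≤ m,n ≤ ℓ}, is a code over the alphabet {a,b}: every word in C_ℓ* has a unique factorization into elements of C_ℓ. -/
/-- The codeword `a b^m a` over Σ = {a,b}, with `a = false`, `b = true`. -/
def wordV (m : ℕ) : List Bool := false :: (List.replicate m true ++ [false])

/-- The codeword `a b^m a a a b^n a`. -/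
def wordE (m n : ℕ) : List Bool :=
  false :: (List.replicate m true ++ [false, false, false] ++ List.replicate n true ++ [false])

/-- A set of words is a code if every word in its Kleene star factors uniquely. -/
def IsCode (C : Set (List Bool)) : Prop :=
  ∀ l₁ l₂ : List (List Bool), (∀ w ∈ l₁, w ∈ C) → (∀ w ∈ l₂, w ∈ C) →
    l₁.flatten = l₂.flatten → l₁ = l₂

/-- `C_ℓ = A_ℓ ∪ B_ℓ`. -/
def Cletters (ℓ : ℕ) : Set (List Bool) :=
  {w | ∃ m, 1 ≤ m ∧ m ≤ ℓ ∧ w = wordV m} ∪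
  {w | ∃ m n, 1 ≤ m ∧ m ≤ ℓ ∧ 1 ≤ n ∧ n ≤ ℓ ∧ w = wordE m n}

/-! Every codeword starts with `ab`. Writing `a b^m a a a b^n a = (a b^m a) a (a b^n a)`, the words
`a b^m a` form a prefix code, and after such a block a factorisation continues either with `ab`
(a new codeword, or the end of the word) or with `aa` (the second half of a long codeword); so the
first codeword of a factorisation is determined by the word, and induction finishes the proof. -/

theorem isCode_of_forall_prefix {C : Set (List Bool)} (p : List Bool) (hp : p ≠ [])
    (hpC : ∀ w ∈ C, p <+: w)
    (hcancel : ∀ w₁ ∈ C, ∀ w₂ ∈ C, ∀ r₁ r₂ : List Bool, (r₁ = [] ∨ p <+: r₁) →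
      (r₂ = [] ∨ p <+: r₂) → w₁ ++ r₁ = w₂ ++ r₂ → w₁ = w₂) :
    IsCode C := by
  have flatten_prefix : ∀ l : List (List Bool), (∀ w ∈ l, w ∈ C) →
      l.flatten = [] ∨ p <+: l.flatten := by
    rintro (_ | ⟨w, l⟩) hl
    · exact Or.inl rfl
    · exact Or.inr ((hpC w (hl w List.mem_cons_self)).trans (List.prefix_append _ _))
  have ne_nil : ∀ w ∈ C, w ≠ [] := fun w hw hw' =>
    hp (List.prefix_nil.mp (hw' ▸ hpC w hw))
  intro l₁
  induction l₁ with
  | nil =>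
    rintro (_ | ⟨w, l⟩) - h₂ h
    · rfl
    · exact absurd (List.append_eq_nil_iff.mp h.symm).1 (ne_nil w (h₂ w List.mem_cons_self))
  | cons w₁ l₁ ih =>
    rintro (_ | ⟨w₂, l₂⟩) h₁ h₂ h
    · exact absurd (List.append_eq_nil_iff.mp h).1 (ne_nil w₁ (h₁ w₁ List.mem_cons_self))
    · have h₁' : ∀ w ∈ l₁, w ∈ C := fun w hw => h₁ w (List.mem_cons_of_mem _ hw)
      have h₂' : ∀ w ∈ l₂, w ∈ C := fun w hw => h₂ w (List.mem_cons_of_mem _ hw)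
      rw [List.flatten_cons, List.flatten_cons] at h
      obtain rfl : w₁ = w₂ := hcancel w₁ (h₁ w₁ List.mem_cons_self) w₂ (h₂ w₂ List.mem_cons_self)
        _ _ (flatten_prefix l₁ h₁') (flatten_prefix l₂ h₂') h
      rw [ih l₂ h₁' h₂' (List.append_cancel_left h)]

theorem replicate_true_append_false_inj {m m' : ℕ} {s t : List Bool}
    (h : List.replicate m true ++ false :: s = List.replicate m' true ++ false :: t) :
    m = m' ∧ s = t := by
  induction m generalizing m' with
  | zero => cases m' <;> simp_all [List.replicate_succ]
  | succ k ih =>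
    cases m' with
    | zero => simp [List.replicate_succ] at h
    | succ k' =>
      simp only [List.replicate_succ, List.cons_append, List.cons.injEq, true_and] at h
      exact (ih h).imp (congrArg (· + 1)) id

theorem wordV_append_inj {m m' : ℕ} {s t : List Bool} (h : wordV m ++ s = wordV m' ++ t) :
    m = m' ∧ s = t :=
  replicate_true_append_false_inj (by simpa [wordV] using h)

theorem wordE_eq_wordV_append (m n : ℕ) : wordE m n = wordV m ++ false :: wordV n := by
  simp [wordE, wordV]

theorem prefix_wordV {m : ℕ} (hm : 1 ≤ m) : [false, true] <+: wordV m := by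
  obtain ⟨k, rfl⟩ := Nat.exists_eq_add_of_le' hm
  exact ⟨List.replicate k true ++ [false], by simp [wordV, List.replicate_succ]⟩

theorem prefix_of_mem_Cletters {ℓ : ℕ} {w : List Bool} (hw : w ∈ Cletters ℓ) :
    [false, true] <+: w := by
  rcases hw with ⟨m, hm, -, rfl⟩ | ⟨m, n, hm, -, -, -, rfl⟩
  · exact prefix_wordV hm
  · exact (prefix_wordV hm).trans (wordE_eq_wordV_append m n ▸ List.prefix_append _ _)

theorem not_prefix_false_cons_wordV_append (n : ℕ) (s : List Bool) :
    ¬ [false, true] <+: false :: (wordV n ++ s) := by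
  simp [wordV]

theorem Cletters_cancel {ℓ : ℕ} {w₁ w₂ r₁ r₂ : List Bool}
    (hw₁ : w₁ ∈ Cletters ℓ) (hw₂ : w₂ ∈ Cletters ℓ)
    (hr₁ : r₁ = [] ∨ [false, true] <+: r₁) (hr₂ : r₂ = [] ∨ [false, true] <+: r₂)
    (h : w₁ ++ r₁ = w₂ ++ r₂) : w₁ = w₂ := by
  rcases hw₁ with ⟨m, -, -, rfl⟩ | ⟨m, n, -, -, -, -, rfl⟩ <;>
    rcases hw₂ with ⟨m', -, -, rfl⟩ | ⟨m', n', -, -, -, -, rfl⟩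
  · rw [(wordV_append_inj h).1]
  · rw [wordE_eq_wordV_append, List.append_assoc, List.cons_append] at h
    exact absurd (((wordV_append_inj h).2 ▸ hr₁).resolve_left (List.cons_ne_nil _ _))
      (not_prefix_false_cons_wordV_append n' r₂)
  · rw [wordE_eq_wordV_append, List.append_assoc, List.cons_append] at h
    exact absurd (((wordV_append_inj h).2 ▸ hr₂).resolve_left (List.cons_ne_nil _ _))
      (not_prefix_false_cons_wordV_append n r₁)
  · simp only [wordE_eq_wordV_append, List.append_assoc, List.cons_append] at h
    obtain ⟨rfl, htail⟩ := wordV_append_inj h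
    rw [(wordV_append_inj (List.cons_injective htail)).1]

theorem stmt0 (ℓ : ℕ) : IsCode (Cletters ℓ) :=
  isCode_of_forall_prefix [false, true] (List.cons_ne_nil _ _)
    (fun _ hw => prefix_of_mem_Cletters hw)
    (fun _ hw₁ _ hw₂ _ _ hr₁ hr₂ h => Cletters_cancel hw₁ hw₂ hr₁ hr₂ h)
end

section
/- The set V ∪ E, where V = {ab^i a : i ≥ 1} and E = {ab^i aaab^j a : i,j ≥ 1}, is an infinite code over {a,b}, and V ∩ E = ∅. -/
/-- V = {a b^i a : i ≥ 1}. -/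
def Vset : Set (List Bool) := {w | ∃ m, 1 ≤ m ∧ w = wordV m}

/-- E = {a b^i a a a b^j a : i, j ≥ 1}. -/
def Eset : Set (List Bool) := {w | ∃ m n, 1 ≤ m ∧ 1 ≤ n ∧ w = wordE m n}

/-!
Every nonempty concatenation of words of `V ∪ E` begins with `ab`. Both kinds of words begin
with `a b^m a`; in a word of `E` this block is followed by `aa`, whereas after a word of `V`
comes either the end or the `ab` of the next factor. Hence the first factor of a factorization
is determined, and uniqueness follows by induction.
-/

theorem isCode_of_head_unique {C : Set (List Bool)} (hnil : [] ∉ C)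
    (head_unique : ∀ w₁ ∈ C, ∀ w₂ ∈ C, ∀ l₁ l₂ : List (List Bool), (∀ w ∈ l₁, w ∈ C) →
      (∀ w ∈ l₂, w ∈ C) → w₁ ++ l₁.flatten = w₂ ++ l₂.flatten → w₁ = w₂) :
    IsCode C := by
  intro l₁ l₂ h₁ h₂ h
  induction l₁ generalizing l₂ with
  | nil =>
    cases l₂ with
    | nil => rfl
    | cons w l =>
      obtain ⟨rfl, -⟩ : w = [] ∧ _ := by simpa using h.symm
      exact absurd (h₂ [] (by simp)) hnil
  | cons w l ih =>
    cases l₂ with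
    | nil =>
      obtain ⟨rfl, -⟩ : w = [] ∧ _ := by simpa using h
      exact absurd (h₁ [] (by simp)) hnil
    | cons w' l' =>
      simp only [List.forall_mem_cons, List.flatten_cons] at h₁ h₂ h
      obtain rfl := head_unique w h₁.1 w' h₂.1 l l' h₁.2 h₂.2 h
      rw [ih l' h₁.2 h₂.2 (List.append_cancel_left h)]

theorem replicate_true_append_false_cons_inj {m m' : ℕ} {x y : List Bool}
    (h : List.replicate m true ++ false :: x = List.replicate m' true ++ false :: y) :
    m = m' ∧ x = y := by
  induction m generalizing m' with
  | zero => cases m' <;> simp_all [List.replicate_succ]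
  | succ k ih =>
    cases m' with
    | zero => simp [List.replicate_succ] at h
    | succ k' =>
      simp only [List.replicate_succ, List.cons_append, List.cons.injEq, true_and] at h
      simpa using ih h

theorem wordV_append (m : ℕ) (r : List Bool) :
    wordV m ++ r = false :: (List.replicate m true ++ false :: r) := by
  simp [wordV]

theorem wordE_append (m n : ℕ) (r : List Bool) :
    wordE m n ++ r = false :: (List.replicate m true ++
      false :: false :: false :: (List.replicate n true ++ false :: r)) := by
  simp [wordE]

theorem prefix_of_mem_Vset_union_Eset {w : List Bool} (hw : w ∈ Vset ∪ Eset) :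
    [false, true] <+: w := by
  rcases hw with ⟨m, hm, rfl⟩ | ⟨m, n, hm, -, rfl⟩
  · obtain ⟨k, rfl⟩ := Nat.exists_eq_add_of_le' hm
    simp [wordV, List.replicate_succ]
  · obtain ⟨k, rfl⟩ := Nat.exists_eq_add_of_le' hm
    simp [wordE, List.replicate_succ]

theorem flatten_eq_nil_or_prefix_of_forall_mem {l : List (List Bool)}
    (hl : ∀ w ∈ l, w ∈ Vset ∪ Eset) :
    l.flatten = [] ∨ [false, true] <+: l.flatten := by
  cases l with
  | nil => exact .inl rfl
  | cons w l =>
    exact .inr ((prefix_of_mem_Vset_union_Eset (hl w List.mem_cons_self)).trans (by simp))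

theorem wordV_append_ne_wordE_append {r : List Bool} (hr : r = [] ∨ [false, true] <+: r)
    (m m' n' : ℕ) (r' : List Bool) : wordV m ++ r ≠ wordE m' n' ++ r' := by
  intro h
  rw [wordV_append, wordE_append, List.cons.injEq] at h
  obtain ⟨-, rfl⟩ := replicate_true_append_false_cons_inj h.2
  simp at hr

theorem eq_of_append_eq_append_of_mem {w₁ w₂ r₁ r₂ : List Bool}
    (hw₁ : w₁ ∈ Vset ∪ Eset) (hw₂ : w₂ ∈ Vset ∪ Eset)
    (hr₁ : r₁ = [] ∨ [false, true] <+: r₁) (hr₂ : r₂ = [] ∨ [false, true] <+: r₂)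
    (h : w₁ ++ r₁ = w₂ ++ r₂) : w₁ = w₂ := by
  rcases hw₁ with ⟨m, -, rfl⟩ | ⟨m, n, -, -, rfl⟩ <;>
    rcases hw₂ with ⟨m', -, rfl⟩ | ⟨m', n', -, -, rfl⟩
  · rw [wordV_append, wordV_append, List.cons.injEq] at h
    rw [(replicate_true_append_false_cons_inj h.2).1]
  · exact (wordV_append_ne_wordE_append hr₁ _ _ _ _ h).elim
  · exact (wordV_append_ne_wordE_append hr₂ _ _ _ _ h.symm).elim
  · rw [wordE_append, wordE_append, List.cons.injEq] at h
    obtain ⟨rfl, hrest⟩ := replicate_true_append_false_cons_inj h.2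
    simp only [List.cons.injEq, true_and] at hrest
    rw [(replicate_true_append_false_cons_inj hrest).1]

theorem isCode_Vset_union_Eset : IsCode (Vset ∪ Eset) :=
  isCode_of_head_unique (fun h => by simpa using prefix_of_mem_Vset_union_Eset h)
    fun _ hw₁ _ hw₂ _ _ hl₁ hl₂ =>
      eq_of_append_eq_append_of_mem hw₁ hw₂ (flatten_eq_nil_or_prefix_of_forall_mem hl₁)
        (flatten_eq_nil_or_prefix_of_forall_mem hl₂)

theorem wordV_injective : Function.Injective wordV := fun m m' h => by
  simpa [wordV] using congrArg List.length h

theorem wordV_ne_wordE (m m' n' : ℕ) : wordV m ≠ wordE m' n' := fun h => by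
  simpa [wordV, wordE, List.count_replicate] using congrArg (List.count false) h

theorem stmt1 :
    IsCode (Vset ∪ Eset) ∧ (Vset ∪ Eset).Infinite ∧ Vset ∩ Eset = ∅ := by
  refine ⟨isCode_Vset_union_Eset, ?_, ?_⟩
  · exact Set.infinite_of_injective_forall_mem (wordV_injective.comp (add_left_injective 1))
      fun k => Or.inl ⟨k + 1, by omega, rfl⟩
  · refine Set.eq_empty_of_forall_notMem ?_
    rintro _ ⟨⟨m, -, rfl⟩, ⟨m', n', -, -, h⟩⟩
    exact wordV_ne_wordE m m' n' h
end

section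
/- Let L ⊆ G satisfy the (b,t,p)-torsion property, let C be the finite alphabet of letters (vertex- and edge-codewords with exponents ≤ t+p−1) occurring in reduced forms of words of L. If v ∈ C* has Parikh vector (over C) componentwise ≤ that of rf(w) for some w ∈ L, and every letter of C occurs at least once in v, then the graph ρ(v) belongs to ρ(L). -/
/-!
Reduction `rf` replaces each exponent `n ≥ t` by `t + (n - t) % p`; by the torsion property
`b^t ∼ b^(t+p)` this does not change the syntactic class, so `rf(w) ∈ L`. The hypotheses on `v`
say exactly that `v` and `rf(w)` use the same set of letters. Finally `ρ` of an encoded word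
depends only on the set of letters used: a factor `a b^m a` or `a b^m aaa b^n a` (with `m, n ≥ 1`)
of a concatenation of codewords lies inside one codeword, since it begins with `ab`, ends with `ba`
and does not contain the pattern `baab` created at each boundary. Hence `ρ(v) = ρ(rf w)`.
-/

abbrev GLetter := ℕ ⊕ (ℕ × ℕ)

def encL : GLetter → List Bool
  | Sum.inl m => wordV m
  | Sum.inr q => wordE q.1 q.2

def encW (l : List GLetter) : List Bool := (l.map encL).flatten

def posL : GLetter → Prop
  | Sum.inl m => 1 ≤ m
  | Sum.inr q => 1 ≤ q.1 ∧ 1 ≤ q.2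

def Gwords : Set (List Bool) :=
  {w | ∃ l : List GLetter, (∀ z ∈ l, posL z) ∧ w = encW l}

def SynEq {Γ : Type} (L : Set (List Γ)) (u v : List Γ) : Prop :=
  ∀ x y : List Γ, x ++ u ++ y ∈ L ↔ x ++ v ++ y ∈ L

def red (t p n : ℕ) : ℕ := if n < t then n else t + (n - t) % p

def redL (t p : ℕ) : GLetter → GLetter
  | Sum.inl m => Sum.inl (red t p m)
  | Sum.inr q => Sum.inr (red t p q.1, red t p q.2)

/-- Exponents bounded by t + p - 1. -/
def expOK (t p : ℕ) : GLetter → Prop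
  | Sum.inl m => m ≤ t + p - 1
  | Sum.inr q => q.1 ≤ t + p - 1 ∧ q.2 ≤ t + p - 1

/-- The finite alphabet `C` of (positive) letters with exponents ≤ t+p−1 occurring
in reduced forms of words of `L`. -/
def Cset (L : Set (List Bool)) (t p : ℕ) : Set GLetter :=
  {z | posL z ∧ expOK t p z ∧
    ∃ w ∈ L, ∃ lw : List GLetter, (∀ y ∈ lw, posL y) ∧ encW lw = w ∧
      z ∈ lw.map (redL t p)}

/-- The graph ρ(u): vertices are factors `a b^m a`, edges are factors
`a b^m a a a b^n a`. -/
def rhoV (w : List Bool) : Set ℕ := {m | 1 ≤ m ∧ wordV m <:+: w}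

def rhoE (w : List Bool) : Set (ℕ × ℕ) :=
  {q | 1 ≤ q.1 ∧ 1 ≤ q.2 ∧ wordE q.1 q.2 <:+: w}

/-- Isomorphism of the (finite, ℕ-labelled) graphs, as equality up to a
relabelling of ℕ. -/
def GraphIso (G H : Set ℕ × Set (ℕ × ℕ)) : Prop :=
  ∃ f : ℕ ≃ ℕ, (∀ m, m ∈ G.1 ↔ f m ∈ H.1) ∧ (∀ q : ℕ × ℕ, q ∈ G.2 ↔ (f q.1, f q.2) ∈ H.2)

-- Core derives `BEq` for `Sum` without a `LawfulBEq` instance; `List.count` needs one.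
instance {α β : Type*} [BEq α] [BEq β] [LawfulBEq α] [LawfulBEq β] :
    LawfulBEq (α ⊕ β) where
  eq_of_beq {a b} h := by
    cases a <;> cases b
    · exact congrArg Sum.inl (eq_of_beq (show (_ : α) == _ from h))
    · exact absurd (show false = true from h) Bool.false_ne_true
    · exact absurd (show false = true from h) Bool.false_ne_true
    · exact congrArg Sum.inr (eq_of_beq (show (_ : β) == _ from h))
  rfl {a} := by
    cases a
    · exact (beq_self_eq_true _ : (_ : α) == _)
    · exact (beq_self_eq_true _ : (_ : β) == _)

namespace SynEq

variable {Γ : Type} {L : Set (List Γ)} {u u' v v' w : List Γ}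

theorem refl (L : Set (List Γ)) (u : List Γ) : SynEq L u u := fun _ _ => Iff.rfl

theorem symm (h : SynEq L u v) : SynEq L v u := fun x y => (h x y).symm

theorem trans (h₁ : SynEq L u v) (h₂ : SynEq L v w) : SynEq L u w :=
  fun x y => (h₁ x y).trans (h₂ x y)

theorem append (h : SynEq L u u') (h' : SynEq L v v') : SynEq L (u ++ v) (u' ++ v') := by
  intro x y
  calc x ++ (u ++ v) ++ y ∈ L ↔ x ++ u ++ (v ++ y) ∈ L := by simp only [List.append_assoc]
    _ ↔ x ++ u' ++ (v ++ y) ∈ L := h x _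
    _ ↔ x ++ u' ++ v ++ y ∈ L := by simp only [List.append_assoc]
    _ ↔ x ++ u' ++ v' ++ y ∈ L := h' _ y
    _ ↔ x ++ (u' ++ v') ++ y ∈ L := by simp only [List.append_assoc]

theorem mem_iff (h : SynEq L u v) : u ∈ L ↔ v ∈ L := by
  simpa using h [] []

variable {a : Γ} {t p : ℕ}

theorem replicate_add_mul (h : SynEq L (List.replicate t a) (List.replicate (t + p) a))
    (r k : ℕ) : SynEq L (List.replicate (t + r + k * p) a) (List.replicate (t + r) a) := by
  induction k with
  | zero => simpa using refl L _
  | succ k ih =>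
    rw [show t + r + (k + 1) * p = (r + k * p) + (t + p) by ring, List.replicate_add]
    refine ((refl L _).append h.symm).trans ?_
    rwa [← List.replicate_add, show r + k * p + t = t + r + k * p by ring]

theorem replicate_red (h : SynEq L (List.replicate t a) (List.replicate (t + p) a)) (n : ℕ) :
    SynEq L (List.replicate n a) (List.replicate (red t p n) a) := by
  unfold red
  split_ifs with hn
  · exact refl L _
  · have hn' : n = t + (n - t) % p + (n - t) / p * p := by
      have := Nat.mod_add_div' (n - t) p
      omega
    have := replicate_add_mul h ((n - t) % p) ((n - t) / p)
    rwa [← hn'] at this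

end SynEq

theorem encW_nil : encW [] = [] := rfl

theorem encW_cons (z : GLetter) (l : List GLetter) : encW (z :: l) = encL z ++ encW l := by
  simp [encW]

section Torsion

variable {L : Set (List Bool)} {t p : ℕ}

theorem SynEq.encL_redL (h : SynEq L (List.replicate t true) (List.replicate (t + p) true))
    (z : GLetter) : SynEq L (encL z) (encL (redL t p z)) := by
  have hrefl := SynEq.refl L
  rcases z with m | ⟨m, n⟩
  · simpa [encL, redL, wordV] using
      ((hrefl [false]).append (h.replicate_red m)).append (hrefl [false])
  · simpa [encL, redL, wordE] using
      ((((hrefl [false]).append (h.replicate_red m)).append (hrefl [false, false, false])).append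
        (h.replicate_red n)).append (hrefl [false])

theorem SynEq.encW_map_redL (h : SynEq L (List.replicate t true) (List.replicate (t + p) true))
    (l : List GLetter) : SynEq L (encW l) (encW (l.map (redL t p))) := by
  induction l with
  | nil => exact SynEq.refl L _
  | cons z l ih => simpa only [List.map_cons, encW_cons] using (h.encL_redL z).append ih

end Torsion

def Delimited (u : List Bool) : Prop :=
  [false, true] <+: u ∧ [true, false] <:+ u ∧ ¬ [true, false, false, true] <:+: u

theorem eq_singleton_or_prefix_of_prefix {α : Type*} {a b : α} {l B : List α} (hl : l <+: B)
    (hne : l ≠ []) (hB : [a, b] <+: B) : l = [a] ∨ [a, b] <+: l := by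
  rcases List.prefix_or_prefix_of_prefix hl hB with h | h
  · rw [List.prefix_cons_iff] at h
    rcases h with rfl | ⟨t, rfl, ht⟩
    · exact absurd rfl hne
    · rcases List.prefix_cons_iff.1 ht with rfl | ⟨t', rfl, -⟩
      · exact Or.inl rfl
      · exact Or.inr (by simp)
  · exact Or.inr h

theorem eq_singleton_or_suffix_of_suffix {α : Type*} {a b : α} {l A : List α} (hl : l <:+ A)
    (hne : l ≠ []) (hA : [a, b] <:+ A) : l = [b] ∨ [a, b] <:+ l := by
  rw [← List.reverse_prefix] at hl hA ⊢
  simpa using eq_singleton_or_prefix_of_prefix hl (by simpa using hne) hA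

theorem Delimited.infix_or_infix_of_infix_append {u A B : List Bool} (hu : Delimited u)
    (hA : [true, false] <:+ A) (hB : B ≠ [] → [false, true] <+: B) (h : u <:+: A ++ B) :
    u <:+: A ∨ u <:+: B := by
  rcases List.infix_append_iff_ne_nil.1 h with h | h | ⟨l₁, l₂, hl₁, hl₂, rfl, hsuf, hpre⟩
  · exact Or.inl h
  · exact Or.inr h
  exfalso
  obtain ⟨hstart, hend, hbaab⟩ := hu
  rcases eq_singleton_or_suffix_of_suffix hsuf hl₁ hA with rfl | ⟨r₁, rfl⟩ <;>
    rcases eq_singleton_or_prefix_of_prefix hpre hl₂ (hB fun hB => by simp_all) with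
      rfl | ⟨r₂, rfl⟩
  · simp at hstart
  · simp at hstart
  · simpa using hend.reverse
  · exact hbaab ⟨r₁, r₂, by simp⟩

section NotInfix

variable {α : Type*} {a b : α} {s X : List α}

theorem not_infix_cons_of_ne (h : ¬ a :: s <:+: X) (hb : b ≠ a) : ¬ a :: s <:+: b :: X := by
  simp [List.infix_cons_iff, h, hb.symm]

theorem not_infix_replicate_append (m : ℕ) (h : ¬ a :: b :: s <:+: X) (h' : ¬ b :: s <+: X)
    (hb : b ≠ a) : ¬ a :: b :: s <:+: List.replicate m a ++ X := by
  induction m with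
  | zero => simpa using h
  | succ m ih =>
    rw [List.replicate_succ, List.cons_append, List.infix_cons_iff, List.cons_prefix_cons]
    rintro (⟨-, hpre⟩ | hinf)
    · rcases m with _ | m
      · exact h' hpre
      · exact hb (List.cons_prefix_cons.1 hpre).1
    · exact ih hinf

end NotInfix

theorem delimited_encL {z : GLetter} (hz : posL z) : Delimited (encL z) := by
  rcases z with m | ⟨m, n⟩
  · obtain ⟨m, rfl⟩ := Nat.exists_eq_add_of_le' (hz : 1 ≤ m)
    refine ⟨by simp [encL, wordV, List.replicate_succ], ?_, ?_⟩
    · simp [encL, wordV, List.replicate_succ']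
    · exact not_infix_cons_of_ne (not_infix_replicate_append _ (by decide) (by decide) (by decide))
        (by decide)
  · obtain ⟨hm, hn⟩ := hz
    obtain ⟨m, rfl⟩ := Nat.exists_eq_add_of_le' hm
    obtain ⟨n, rfl⟩ := Nat.exists_eq_add_of_le' hn
    refine ⟨by simp [encL, wordE, List.replicate_succ], ?_, ?_⟩
    · exact ⟨false :: (List.replicate (m + 1) true ++ [false, false, false] ++
        List.replicate n true), by simp [encL, wordE, List.replicate_succ' (n := n)]⟩
    · simp only [encL, wordE, List.append_assoc, List.cons_append, List.nil_append]
      refine not_infix_cons_of_ne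
        (not_infix_replicate_append _ ?_ (by simp) (by decide)) (by decide)
      exact not_infix_cons_of_ne (not_infix_cons_of_ne (not_infix_cons_of_ne
        (not_infix_replicate_append _ (by decide) (by decide) (by decide))
        (by decide)) (by decide)) (by decide)

theorem prefix_encW {l : List GLetter} (hl : ∀ z ∈ l, posL z) (hne : encW l ≠ []) :
    [false, true] <+: encW l := by
  cases l with
  | nil => exact absurd encW_nil hne
  | cons z l =>
    rw [encW_cons]
    exact (delimited_encL (hl z List.mem_cons_self)).1.trans (List.prefix_append _ _)

theorem Delimited.infix_encW_iff {u : List Bool} (hu : Delimited u) {l : List GLetter}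
    (hl : ∀ z ∈ l, posL z) : u <:+: encW l ↔ ∃ z ∈ l, u <:+: encL z := by
  refine ⟨fun h => ?_, fun ⟨z, hz, h⟩ =>
    h.trans (List.infix_of_mem_flatten (List.mem_map_of_mem hz))⟩
  induction l with
  | nil =>
    rw [encW_nil, List.infix_nil] at h
    simpa [h] using hu.1
  | cons z l ih =>
    have hl' : ∀ y ∈ l, posL y := fun y hy => hl y (List.mem_cons_of_mem z hy)
    rw [encW_cons] at h
    rcases hu.infix_or_infix_of_infix_append (delimited_encL (hl z List.mem_cons_self)).2.1
      (prefix_encW hl') h with h | h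
    · exact ⟨z, List.mem_cons_self, h⟩
    · obtain ⟨y, hy, h⟩ := ih hl' h
      exact ⟨y, List.mem_cons_of_mem z hy, h⟩

theorem Delimited.infix_encW_congr {u : List Bool} (hu : Delimited u) {l₁ l₂ : List GLetter}
    (h₁ : ∀ z ∈ l₁, posL z) (h₂ : ∀ z ∈ l₂, posL z) (h : ∀ z, z ∈ l₁ ↔ z ∈ l₂) :
    u <:+: encW l₁ ↔ u <:+: encW l₂ := by
  simp only [hu.infix_encW_iff h₁, hu.infix_encW_iff h₂, h]

theorem rhoV_encW_congr {l₁ l₂ : List GLetter} (h₁ : ∀ z ∈ l₁, posL z) (h₂ : ∀ z ∈ l₂, posL z)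
    (h : ∀ z, z ∈ l₁ ↔ z ∈ l₂) : rhoV (encW l₁) = rhoV (encW l₂) := by
  ext m
  exact and_congr_right fun hm => (delimited_encL (z := .inl m) hm).infix_encW_congr h₁ h₂ h

theorem rhoE_encW_congr {l₁ l₂ : List GLetter} (h₁ : ∀ z ∈ l₁, posL z) (h₂ : ∀ z ∈ l₂, posL z)
    (h : ∀ z, z ∈ l₁ ↔ z ∈ l₂) : rhoE (encW l₁) = rhoE (encW l₂) := by
  ext ⟨m, n⟩
  exact and_congr_right fun hm => and_congr_right fun hn =>
    (delimited_encL (z := .inr (m, n)) ⟨hm, hn⟩).infix_encW_congr h₁ h₂ h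

theorem getLast?_encL (z : GLetter) : (encL z).getLast? = some false := by
  rcases z with m | ⟨m, n⟩ <;> simp [encL, wordV, wordE, List.getLast?_cons]

theorem getLast?_encW_ne_some_true (l : List GLetter) : (encW l).getLast? ≠ some true := by
  induction l with
  | nil => simp [encW_nil]
  | cons z l ih =>
    rw [encW_cons, List.getLast?_append, getLast?_encL]
    cases h : (encW l).getLast? <;> simp_all

theorem not_synEq_nil_replicate_of_subset_Gwords {L : Set (List Bool)} (hLG : L ⊆ Gwords)
    {w : List Bool} (hw : w ∈ L) {p : ℕ} (hp : 1 ≤ p) :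
    ¬ SynEq L [] (List.replicate p true) := by
  intro h
  obtain ⟨l, -, hl⟩ := hLG ((h w []).1 (by simpa using hw))
  obtain ⟨p, rfl⟩ := Nat.exists_eq_add_of_le' hp
  apply getLast?_encW_ne_some_true l
  rw [← hl, List.replicate_succ']
  simp

theorem red_pos {t p n : ℕ} (ht : 1 ≤ t) (hn : 1 ≤ n) : 1 ≤ red t p n := by
  unfold red; split <;> omega

theorem red_le {t p n : ℕ} (hp : 1 ≤ p) : red t p n ≤ t + p - 1 := by
  unfold red
  split
  · omega
  · have := Nat.mod_lt (n - t) hp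
    omega

theorem posL_redL {t p : ℕ} (ht : 1 ≤ t) {z : GLetter} (hz : posL z) : posL (redL t p z) := by
  rcases z with m | ⟨m, n⟩
  · exact red_pos ht hz
  · exact ⟨red_pos ht hz.1, red_pos ht hz.2⟩

theorem expOK_redL {t p : ℕ} (hp : 1 ≤ p) (z : GLetter) : expOK t p (redL t p z) := by
  rcases z with m | ⟨m, n⟩
  · exact red_le hp
  · exact ⟨red_le hp, red_le hp⟩

theorem mem_Cset_of_mem_map_redL {L : Set (List Bool)} {t p : ℕ} (ht : 1 ≤ t) (hp : 1 ≤ p)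
    {lw : List GLetter} (hlw : ∀ z ∈ lw, posL z) (hw : encW lw ∈ L) {z : GLetter}
    (hz : z ∈ lw.map (redL t p)) : z ∈ Cset L t p := by
  obtain ⟨y, hy, rfl⟩ := List.mem_map.1 hz
  exact ⟨posL_redL ht (hlw y hy), expOK_redL hp y, _, hw, lw, hlw, rfl, hz⟩

theorem GraphIso.refl (G : Set ℕ × Set (ℕ × ℕ)) : GraphIso G G :=
  ⟨Equiv.refl ℕ, fun _ => Iff.rfl, fun _ => Iff.rfl⟩

/-- If `v ∈ C^*` has Parikh vector componentwise below that of `rf(w)` for some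
`w ∈ L`, and every letter of `C` occurs in `v`, then `ρ(v) ∈ ρ(L)`
(graphs taken up to isomorphism). -/
theorem stmt10 (L : Set (List Bool)) (hLG : L ⊆ Gwords) (t p : ℕ) (hp : 1 ≤ p)
    (htor : SynEq L (List.replicate t true) (List.replicate (t + p) true))
    (v : List GLetter) (w : List Bool) (hw : w ∈ L)
    (lw : List GLetter) (hlw : ∀ z ∈ lw, posL z) (henc : encW lw = w)
    (hvC : ∀ z ∈ v, z ∈ Cset L t p)
    (hcount : ∀ z : GLetter, v.count z ≤ (lw.map (redL t p)).count z)
    (hall : ∀ z ∈ Cset L t p, z ∈ v) :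
    ∃ w' ∈ L, GraphIso (rhoV (encW v), rhoE (encW v)) (rhoV w', rhoE w') := by
  subst henc
  obtain ht | ht := Nat.eq_zero_or_pos t
  · -- for `t = 0`, reduction may produce the exponent `0`; but then `L` is not inside `G`
    subst ht
    exact absurd (by simpa using htor) (not_synEq_nil_replicate_of_subset_Gwords hLG hw hp)
  have hv : ∀ z ∈ v, posL z := fun z hz => (hvC z hz).1
  have hrf : ∀ z ∈ lw.map (redL t p), posL z :=
    List.forall_mem_map.2 fun z hz => posL_redL ht (hlw z hz)
  have hmem : ∀ z, z ∈ v ↔ z ∈ lw.map (redL t p) := fun z =>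
    ⟨fun hz => List.count_pos_iff.1 ((List.count_pos_iff.2 hz).trans_le (hcount z)),
      fun hz => hall z (mem_Cset_of_mem_map_redL ht hp hlw hw hz)⟩
  refine ⟨_, (htor.encW_map_redL lw).mem_iff.1 hw, ?_⟩
  rw [rhoV_encW_congr hv hrf hmem, rhoE_encW_congr hv hrf hmem]
  exact GraphIso.refl _
end

section
/- Let F = (V_F, E_F, μ) be a marked graph containing a marked edge (u,v) with both endpoints u and v marked and u ≠ v. Then for every finite bipartite edge-graph H, the disjoint union of (V_F, E_F) and H belongs to the family G_F of finite subgraphs of F^∞ containing F as induced subgraph. -/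
/-- A marked graph: a finite directed graph with marked vertices and edges,
where every marked edge has at least one marked endpoint. -/
structure MarkedGraph (V : Type) where
  Edge : V → V → Prop
  markedV : Set V
  markedE : Set (V × V)
  markedE_edge : ∀ e ∈ markedE, Edge e.1 e.2
  markedE_endpoint : ∀ e ∈ markedE, e.1 ∈ markedV ∨ e.2 ∈ markedV

/-- The vertices of `F^∞`: level-0 copies of all vertices and copies
`(u,k)`, `k ∈ ℕ`, of marked vertices. -/
def Vinf {V : Type} (F : MarkedGraph V) : Set (V × ℕ) :=
  {q | q.2 = 0 ∨ q.1 ∈ F.markedV}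

/-- The edges of `F^∞`: `E_F × {0}` together with all `((u,k),(v,ℓ))`
for marked edges `(u,v)`. -/
def Einf {V : Type} (F : MarkedGraph V) (x y : V × ℕ) : Prop :=
  (x.2 = 0 ∧ y.2 = 0 ∧ F.Edge x.1 y.1) ∨
    ((x.1, y.1) ∈ F.markedE ∧ x ∈ Vinf F ∧ y ∈ Vinf F)

/-- Membership in the family `G_F`: finite subgraphs of `F^∞` containing the
copy `(V_F × {0}, E_F × {0})` of `F` as an induced subgraph. -/
def MemGF {V : Type} (F : MarkedGraph V) (Vg : Set (V × ℕ))
    (Eg : Set ((V × ℕ) × (V × ℕ))) : Prop :=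
  Vg.Finite ∧ Vg ⊆ Vinf F ∧ (∀ u : V, (u, 0) ∈ Vg) ∧
  (∀ e ∈ Eg, Einf F e.1 e.2 ∧ e.1 ∈ Vg ∧ e.2 ∈ Vg) ∧
  (∀ u v : V, ((u, 0), (v, 0)) ∈ Eg ↔ F.Edge u v)

/-- The level-0 copy of the vertex set. -/
def canonV (V : Type) : Set (V × ℕ) := {q | q.2 = 0}

/-- The level-0 copy of the edge set. -/
def canonE {V : Type} (F : MarkedGraph V) : Set ((V × ℕ) × (V × ℕ)) :=
  {e | e.1.2 = 0 ∧ e.2.2 = 0 ∧ F.Edge e.1.1 e.2.1}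

/-- If `F` has a marked edge `(u,v)` with both (distinct) endpoints marked, then
for every finite bipartite edge-graph `H` the disjoint union of `F` and `H`
belongs to `G_F`. -/
theorem stmt13 {V W : Type} [Fintype V] [Fintype W] (F : MarkedGraph V)
    (u v : V) (hm : (u, v) ∈ F.markedE) (hu : u ∈ F.markedV) (hv : v ∈ F.markedV)
    (huv : u ≠ v)
    (HE : W → W → Prop) (P : W → Bool)
    (hbip : ∀ x y, HE x y → P x = false ∧ P y = true)
    (hnoiso : ∀ x : W, ∃ y : W, HE x y ∨ HE y x) :
    ∃ (Vg : Set (V × ℕ)) (Eg : Set ((V × ℕ) × (V × ℕ))) (f : W → V × ℕ),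
      Function.Injective f ∧ (∀ x, (f x).2 ≠ 0) ∧
      Vg = canonV V ∪ Set.range f ∧
      Eg = canonE F ∪ {e | ∃ x y, HE x y ∧ e = (f x, f y)} ∧
      MemGF F Vg Eg := by
  classical
  let e := Fintype.equivFin W
  refine ⟨canonV V ∪ Set.range (fun x : W => ((if P x then v else u : V), (e x : ℕ) + 1)),
    canonE F ∪ {p | ∃ x y, HE x y ∧ p = (((if P x then v else u : V), (e x : ℕ) + 1),
      ((if P y then v else u : V), (e y : ℕ) + 1))},
    fun x : W => ((if P x then v else u : V), (e x : ℕ) + 1), ?_, ?_, rfl, rfl, ?_, ?_, ?_, ?_, ?_⟩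
  · intro a b hab
    have h2 : (e a : ℕ) + 1 = (e b : ℕ) + 1 := congrArg Prod.snd hab
    have : e a = e b := Fin.ext (Nat.succ_injective h2)
    exact e.injective this
  · intro x; simp
  · refine Set.Finite.union ?_ (Set.finite_range _)
    have : canonV V ⊆ Set.range (fun w : V => (w, 0)) := by
      rintro ⟨a, b⟩ hb
      exact ⟨a, by simp [canonV] at hb; simp [hb]⟩
    exact Set.Finite.subset (Set.finite_range _) this
  · rintro p (hb | ⟨x, rfl⟩)
    · exact Or.inl hb
    · right
      simp only
      split
      · exact hv
      · exact hu
  · intro w; exact Or.inl rfl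
  · rintro ⟨p, q⟩ (⟨h1, h2, h3⟩ | ⟨x, y, hxy, hpq⟩)
    · refine ⟨Or.inl ⟨h1, h2, h3⟩, Or.inl h1, Or.inl h2⟩
    · obtain ⟨hx, hy⟩ := hbip x y hxy
      have hp : p = ((if P x then v else u : V), (e x : ℕ) + 1) := congrArg Prod.fst hpq
      have hq : q = ((if P y then v else u : V), (e y : ℕ) + 1) := congrArg Prod.snd hpq
      subst hp; subst hq
      refine ⟨Or.inr ⟨?_, Or.inr ?_, Or.inr ?_⟩, Or.inr ⟨x, rfl⟩, Or.inr ⟨y, rfl⟩⟩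
      · simp [hx, hy]; exact hm
      · simp [hx]; exact hu
      · simp [hy]; exact hv
  · intro a b
    constructor
    · rintro (⟨_, _, h⟩ | ⟨x, y, hxy, hpq⟩)
      · exact h
      · exact absurd (congrArg (fun p => p.1.2) hpq) (by simp)
    · intro h; exact Or.inl ⟨rfl, rfl, h⟩
end

section
/- Let F = (V_F, E_F, μ) be a marked graph containing a marked self-loop (u,u). Then for every finite graph H, the disjoint union of (V_F, E_F) and H belongs to G_F. In particular, the induced subgraph of F^∞ on {(u,k) : k ≥ 1} is an infinite complete graph. -/
/-- If `F` has a marked self-loop `(u,u)`, then for every finite graph `H` the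
disjoint union of `F` and `H` belongs to `G_F`; in particular the induced
subgraph of `F^∞` on `{(u,k) : k ≥ 1}` is an infinite complete graph. -/
theorem stmt14 {V : Type} [Fintype V] (F : MarkedGraph V)
    (u : V) (hm : (u, u) ∈ F.markedE) :
    (∀ (W : Type) [Fintype W] (HE : W → W → Prop),
      ∃ (Vg : Set (V × ℕ)) (Eg : Set ((V × ℕ) × (V × ℕ))) (f : W → V × ℕ),
        Function.Injective f ∧ (∀ x, (f x).2 ≠ 0) ∧
        Vg = canonV V ∪ Set.range f ∧
        Eg = canonE F ∪ {e | ∃ x y, HE x y ∧ e = (f x, f y)} ∧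
        MemGF F Vg Eg) ∧
    (∀ k l : ℕ, 1 ≤ k → 1 ≤ l → Einf F (u, k) (u, l)) := by
  have hu : u ∈ F.markedV := by
    rcases F.markedE_endpoint _ hm with h | h <;> exact h
  have huV : ∀ k : ℕ, ((u, k) : V × ℕ) ∈ Vinf F := fun k => Or.inr hu
  constructor
  · intro W _ HE
    classical
    set f : W → V × ℕ := fun x => (u, (Fintype.equivFin W x : ℕ) + 1) with hf
    refine ⟨canonV V ∪ Set.range f, _, f, ?_, ?_, rfl, rfl, ?_, ?_, ?_, ?_, ?_⟩
    · intro a b hab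
      have : ((Fintype.equivFin W a : ℕ)) = (Fintype.equivFin W b : ℕ) := by
        simpa [hf] using hab
      exact (Fintype.equivFin W).injective (Fin.ext this)
    · intro x; simp [hf]
    · apply Set.Finite.union
      · have : canonV V = Set.range (fun v : V => (v, 0)) := by
          ext q; constructor
          · rintro h; exact ⟨q.1, by ext <;> simp_all [canonV]⟩
          · rintro ⟨v, rfl⟩; simp [canonV]
        rw [this]; exact Set.finite_range _
      · exact Set.finite_range _
    · rintro q (hq | ⟨x, rfl⟩)
      · exact Or.inl hq
      · exact Or.inr hu
    · intro v; exact Or.inl rfl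
    · rintro e (⟨h1, h2, h3⟩ | ⟨x, y, hxy, rfl⟩)
      · exact ⟨Or.inl ⟨h1, h2, h3⟩, Or.inl h1, Or.inl h2⟩
      · exact ⟨Or.inr ⟨by simpa [hf] using hm, Or.inr hu, Or.inr hu⟩,
          Or.inr ⟨x, rfl⟩, Or.inr ⟨y, rfl⟩⟩
    · intro a b
      constructor
      · rintro (⟨_, _, h⟩ | ⟨x, y, hxy, he⟩)
        · exact h
        · exfalso
          have : (0 : ℕ) = (Fintype.equivFin W x : ℕ) + 1 := by
            have := congrArg (fun p => p.1.2) he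
            simpa [hf] using this
          omega
      · intro h; exact Or.inl ⟨rfl, rfl, h⟩
  · intro k l hk hl
    exact Or.inr ⟨hm, huV k, huV l⟩
end

section
/- Let F = (V_F, E_F, μ) be a marked graph with at most two marked vertices and no marked self-loop. Then G_F contains no graph having a triangle (or any non-bipartite connected graph) as a connected component disjoint from the copy of F. Conversely, if F has a marked self-loop, then the disjoint union of F with a triangle lies in G_F. -/
/-- Undirected adjacency in an edge set. -/
def adjE {α : Type} (Eg : Set (α × α)) (x y : α) : Prop :=
  (x, y) ∈ Eg ∨ (y, x) ∈ Eg

/-- With at most two marked vertices and no marked self-loop, no `G ∈ G_F` has a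
triangle as a connected component disjoint from the copy of `F`; conversely, a
marked self-loop yields the disjoint union of `F` and a triangle in `G_F`. -/
theorem stmt16 {V : Type} [Fintype V] (F : MarkedGraph V) :
    ((F.markedV.ncard ≤ 2 ∧ ∀ u : V, (u, u) ∉ F.markedE) →
      ∀ (Vg : Set (V × ℕ)) (Eg : Set ((V × ℕ) × (V × ℕ))), MemGF F Vg Eg →
        ¬ ∃ x y z : V × ℕ, x ∈ Vg ∧ y ∈ Vg ∧ z ∈ Vg ∧
            x ≠ y ∧ y ≠ z ∧ x ≠ z ∧ x.2 ≠ 0 ∧ y.2 ≠ 0 ∧ z.2 ≠ 0 ∧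
            adjE Eg x y ∧ adjE Eg y z ∧ adjE Eg x z ∧
            (∀ w ∈ Vg, (adjE Eg w x ∨ adjE Eg w y ∨ adjE Eg w z) →
              w = x ∨ w = y ∨ w = z)) ∧
    ((∃ u : V, (u, u) ∈ F.markedE) →
      ∃ (Vg : Set (V × ℕ)) (Eg : Set ((V × ℕ) × (V × ℕ))), MemGF F Vg Eg ∧
        ∃ x y z : V × ℕ, x ∈ Vg ∧ y ∈ Vg ∧ z ∈ Vg ∧
          x ≠ y ∧ y ≠ z ∧ x ≠ z ∧ x.2 ≠ 0 ∧ y.2 ≠ 0 ∧ z.2 ≠ 0 ∧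
          adjE Eg x y ∧ adjE Eg y z ∧ adjE Eg x z ∧
          (∀ w ∈ Vg, (adjE Eg w x ∨ adjE Eg w y ∨ adjE Eg w z) →
            w = x ∨ w = y ∨ w = z)) := by
  constructor
  · rintro ⟨hcard, hloop⟩ Vg Eg ⟨hfin, hsub, h0, hE, hind⟩
      ⟨x, y, z, hx, hy, hz, hxy, hyz, hxz, hx2, hy2, hz2, axy, ayz, axz, -⟩
    -- each pair gives a marked edge between first components
    have key : ∀ a b : V × ℕ, a.2 ≠ 0 → b.2 ≠ 0 → adjE Eg a b →
        (a.1, b.1) ∈ F.markedE ∨ (b.1, a.1) ∈ F.markedE := by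
      rintro a b ha hb (h | h)
      · rcases (hE _ h).1 with ⟨h1, -⟩ | ⟨h1, -⟩
        · exact absurd h1 ha
        · exact Or.inl h1
      · rcases (hE _ h).1 with ⟨h1, -⟩ | ⟨h1, -⟩
        · exact absurd h1 hb
        · exact Or.inr h1
    have mk : ∀ a b : V × ℕ, a.2 ≠ 0 → b.2 ≠ 0 → adjE Eg a b → a.1 ≠ b.1 := by
      intro a b ha hb hab he
      rcases key a b ha hb hab with h | h <;>
        · rw [he] at h; exact hloop _ h
    have mV : ∀ a : V × ℕ, a ∈ Vg → a.2 ≠ 0 → a.1 ∈ F.markedV := by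
      intro a ha ha2
      rcases hsub ha with h | h
      · exact absurd h ha2
      · exact h
    have hxy1 := mk x y hx2 hy2 axy
    have hyz1 := mk y z hy2 hz2 ayz
    have hxz1 := mk x z hx2 hz2 axz
    have hsub3 : ({x.1, y.1, z.1} : Set V) ⊆ F.markedV := by
      intro a ha
      rcases ha with rfl | rfl | rfl
      · exact mV x hx hx2
      · exact mV y hy hy2
      · exact mV z hz hz2
    have h3 : ({x.1, y.1, z.1} : Set V).ncard = 3 :=
      Set.ncard_eq_three.mpr ⟨x.1, y.1, z.1, hxy1, hxz1, hyz1, rfl⟩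
    have := Set.ncard_le_ncard hsub3 (Set.toFinite _)
    omega
  · rintro ⟨u, hu⟩
    have humk : u ∈ F.markedV := by
      rcases F.markedE_endpoint _ hu with h | h <;> exact h
    refine ⟨canonV V ∪ {(u, 1), (u, 2), (u, 3)},
      canonE F ∪ {((u, 1), (u, 2)), ((u, 2), (u, 3)), ((u, 1), (u, 3))}, ?_, ?_⟩
    · refine ⟨?_, ?_, ?_, ?_, ?_⟩
      · apply Set.Finite.union
        · have : canonV V = (fun v : V => (v, 0)) '' Set.univ := by
            ext ⟨a, b⟩
            simp [canonV, eq_comm]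
          rw [this]
          exact (Set.finite_univ).image _
        · exact (Set.finite_singleton _).insert _ |>.insert _
      · rintro ⟨a, k⟩ (h | h)
        · exact Or.inl h
        · rcases h with h | h | h <;> · rw [h]; exact Or.inr humk
      · intro v; exact Or.inl rfl
      · rintro ⟨⟨a, k⟩, ⟨b, l⟩⟩ (⟨h1, h2, h3⟩ | h)
        · simp only at h1 h2 h3
          subst h1; subst h2
          exact ⟨Or.inl ⟨rfl, rfl, h3⟩, Or.inl rfl, Or.inl rfl⟩
        · simp only [Set.mem_insert_iff, Set.mem_singleton_iff, Prod.mk.injEq] at h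
          rcases h with ⟨⟨rfl, rfl⟩, rfl, rfl⟩ | ⟨⟨rfl, rfl⟩, rfl, rfl⟩ | ⟨⟨rfl, rfl⟩, rfl, rfl⟩ <;>
            exact ⟨Or.inr ⟨hu, Or.inr humk, Or.inr humk⟩, by simp, by simp⟩
      · intro a b
        constructor
        · rintro (⟨-, -, h⟩ | h)
          · exact h
          · rcases h with h | h | h <;> simp_all
        · intro h; exact Or.inl ⟨rfl, rfl, h⟩
    · refine ⟨(u, 1), (u, 2), (u, 3), by simp, by simp, by simp,
        by simp, by simp, by simp, by simp, by simp, by simp,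
        by simp [adjE], by simp [adjE], by simp [adjE], ?_⟩
      rintro ⟨a, k⟩ hw hadj
      have : ∀ p q : V × ℕ, ((a, k), p) ∈ canonE F ∪ {((u, 1), (u, 2)), ((u, 2), (u, 3)), ((u, 1), (u, 3))} ∨ (p, (a, k)) ∈ canonE F ∪ {((u, 1), (u, 2)), ((u, 2), (u, 3)), ((u, 1), (u, 3))} → p = q → p.2 ≠ 0 → (a, k) = (u, 1) ∨ (a, k) = (u, 2) ∨ (a, k) = (u, 3) := by
        rintro p q (h | h) rfl hp2
        · rcases h with ⟨-, h2, -⟩ | h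
          · exact absurd h2 hp2
          · rcases h with h | h | h <;> simp_all
        · rcases h with ⟨h2, -, -⟩ | h
          · exact absurd h2 hp2
          · rcases h with h | h | h <;> simp_all
      rcases hadj with h | h | h
      · exact this (u, 1) (u, 1) h rfl (by simp)
      · exact this (u, 2) (u, 2) h rfl (by simp)
      · exact this (u, 3) (u, 3) h rfl (by simp)
end

section
/- Let F = (V_F, E_F, μ) be a marked graph. Then sup{χ(G) : G ∈ G_F} = ∞ iff F contains a marked self-loop. Moreover, if F has no marked self-loop, then max{χ(G) : G ∈ G_F} = χ(V_F, E_F), where χ ignores self-loops. -/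
/-- `k`-colorability of a member of `G_F` (self-loops are ignored). -/
def IsColorable {V : Type} (Eg : Set ((V × ℕ) × (V × ℕ))) (k : ℕ) : Prop :=
  ∃ c : V × ℕ → ℕ, (∀ x, c x < k) ∧ ∀ e ∈ Eg, e.1 ≠ e.2 → c e.1 ≠ c e.2

/-- The chromatic number of a member of `G_F`. -/
noncomputable def chrom {V : Type} (Eg : Set ((V × ℕ) × (V × ℕ))) : ℕ :=
  sInf {k | IsColorable Eg k}

/-- The chromatic number of the underlying graph `(V_F, E_F)`. -/
noncomputable def chromF {V : Type} (F : MarkedGraph V) : ℕ :=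
  sInf {k | ∃ c : V → ℕ, (∀ x, c x < k) ∧ ∀ x y : V, F.Edge x y → x ≠ y → c x ≠ c y}


lemma chromF_spec {V : Type} [Fintype V] (F : MarkedGraph V) :
    ∃ c : V → ℕ, (∀ x, c x < chromF F) ∧
      ∀ x y : V, F.Edge x y → x ≠ y → c x ≠ c y := by
  have hne : {k | ∃ c : V → ℕ, (∀ x, c x < k) ∧
      ∀ x y : V, F.Edge x y → x ≠ y → c x ≠ c y}.Nonempty := by
    refine ⟨Fintype.card V, fun v => (Fintype.equivFin V v : ℕ),
      fun v => (Fintype.equivFin V v).2, ?_⟩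
    intro x y _ hxy hcontra
    exact hxy ((Fintype.equivFin V).injective (Fin.val_injective hcontra))
  exact Nat.sInf_mem hne

lemma chrom_le_chromF {V : Type} [Fintype V] (F : MarkedGraph V)
    (hno : ∀ u : V, (u, u) ∉ F.markedE)
    {Vg : Set (V × ℕ)} {Eg : Set ((V × ℕ) × (V × ℕ))}
    (hG : MemGF F Vg Eg) : chrom Eg ≤ chromF F := by
  obtain ⟨c, hc1, hc2⟩ := chromF_spec F
  apply Nat.sInf_le
  refine ⟨fun p => c p.1, fun p => hc1 _, ?_⟩
  rintro ⟨⟨x, i⟩, ⟨y, j⟩⟩ he hne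
  obtain ⟨hEinf, -, -⟩ := hG.2.2.2.1 _ he
  rcases hEinf with ⟨h1, h2, hedge⟩ | ⟨hm, -, -⟩
  · simp only at h1 h2 ⊢
    refine hc2 x y hedge ?_
    rintro rfl
    exact hne (by simp [h1, h2])
  · exact hc2 x y (F.markedE_edge _ hm) (fun h => hno x (by simpa [h] using hm))

lemma memGF_canon {V : Type} [Fintype V] (F : MarkedGraph V) :
    MemGF F (canonV V) (canonE F) := by
  refine ⟨?_, ?_, fun u => rfl, ?_, ?_⟩
  · refine (Set.finite_range (fun v : V => (v, 0))).subset ?_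
    rintro ⟨v, j⟩ h
    simp only [canonV, Set.mem_setOf_eq] at h
    exact ⟨v, by rw [h]⟩
  · intro q hq; exact Or.inl hq
  · rintro ⟨⟨x, i⟩, ⟨y, j⟩⟩ ⟨h1, h2, hedge⟩
    exact ⟨Or.inl ⟨h1, h2, hedge⟩, h1, h2⟩
  · intro u v
    constructor
    · rintro ⟨-, -, h⟩; exact h
    · intro h; exact ⟨rfl, rfl, h⟩

lemma chrom_canon_eq {V : Type} [Fintype V] (F : MarkedGraph V)
    (hno : ∀ u : V, (u, u) ∉ F.markedE) :
    chrom (canonE F) = chromF F := by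
  refine le_antisymm (chrom_le_chromF F hno (memGF_canon F)) ?_
  have hne : {k | IsColorable (canonE F) k}.Nonempty := by
    obtain ⟨c, hc1, hc2⟩ := chromF_spec F
    refine ⟨chromF F, fun p => c p.1, fun p => hc1 _, ?_⟩
    rintro ⟨⟨x, i⟩, ⟨y, j⟩⟩ ⟨h1, h2, hedge⟩ hne'
    refine hc2 x y hedge ?_
    rintro rfl
    simp only at h1 h2
    exact hne' (by simp [h1, h2])
  obtain ⟨c, hc1, hc2⟩ := Nat.sInf_mem hne
  apply Nat.sInf_le
  refine ⟨fun v => c (v, 0), fun v => hc1 _, ?_⟩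
  intro x y hxy hne'
  exact hc2 ((x, 0), (y, 0)) ⟨rfl, rfl, hxy⟩ (by simp [hne'])

lemma exists_big {V : Type} [Fintype V] (F : MarkedGraph V) {u : V}
    (hu : (u, u) ∈ F.markedE) (n : ℕ) :
    ∃ (Vg : Set (V × ℕ)) (Eg : Set ((V × ℕ) × (V × ℕ))),
      MemGF F Vg Eg ∧ n ≤ chrom Eg := by
  have huV : u ∈ F.markedV := (F.markedE_endpoint _ hu).elim id id
  refine ⟨canonV V ∪ {p | p.1 = u ∧ p.2 < n},
    canonE F ∪ {e | e.1.1 = u ∧ e.2.1 = u ∧ e.1.2 < n ∧ e.2.2 < n}, ?_, ?_⟩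
  · refine ⟨?_, ?_, fun v => Or.inl rfl, ?_, ?_⟩
    · refine ((Set.finite_univ.prod (Set.finite_Iio (n + 1)))).subset ?_
      rintro ⟨v, j⟩ (h | ⟨-, h⟩)
      · exact ⟨Set.mem_univ _, by simp only [canonV, Set.mem_setOf_eq] at h; simp [h]⟩
      · exact ⟨Set.mem_univ _, by simp; omega⟩
    · rintro ⟨v, j⟩ (h | ⟨h1, -⟩)
      · exact Or.inl h
      · exact Or.inr (by simp only at h1; rw [h1]; exact huV)
    · rintro ⟨⟨x, i⟩, ⟨y, j⟩⟩ (⟨h1, h2, hedge⟩ | ⟨h1, h2, h3, h4⟩)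
      · exact ⟨Or.inl ⟨h1, h2, hedge⟩, Or.inl h1, Or.inl h2⟩
      · simp only at h1 h2 h3 h4
        subst h1; subst h2
        exact ⟨Or.inr ⟨hu, Or.inr huV, Or.inr huV⟩,
          Or.inr ⟨rfl, h3⟩, Or.inr ⟨rfl, h4⟩⟩
    · intro x y
      constructor
      · rintro (⟨-, -, h⟩ | ⟨h1, h2, -, -⟩)
        · exact h
        · simp only at h1 h2; subst h1; subst h2; exact F.markedE_edge _ hu
      · intro h; exact Or.inl ⟨rfl, rfl, h⟩
  · -- n ≤ chrom
    have hne : {k | IsColorable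
        (canonE F ∪ {e : (V × ℕ) × (V × ℕ) | e.1.1 = u ∧ e.2.1 = u ∧ e.1.2 < n ∧ e.2.2 < n}) k}.Nonempty := by
      refine ⟨Fintype.card V * (n + 1),
        fun p => (Fintype.equivFin V p.1 : ℕ) * (n + 1) + min p.2 n, ?_, ?_⟩
      · intro p
        have h1 : (Fintype.equivFin V p.1 : ℕ) < Fintype.card V := (Fintype.equivFin V p.1).2
        have h2 : min p.2 n < n + 1 := by omega
        calc (Fintype.equivFin V p.1 : ℕ) * (n + 1) + min p.2 n
            < ((Fintype.equivFin V p.1 : ℕ) + 1) * (n + 1) := by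
              rw [add_mul, one_mul]; omega
          _ ≤ Fintype.card V * (n + 1) := Nat.mul_le_mul_right _ h1
      · rintro ⟨⟨x, i⟩, ⟨y, j⟩⟩ (⟨h1, h2, hedge⟩ | ⟨h1, h2, h3, h4⟩) hne' hc
        · simp only at h1 h2
          subst h1; subst h2
          dsimp only at hc
          simp only [Nat.zero_min, Nat.add_zero] at hc
          have hxy : x ≠ y := fun h => hne' (by simp [h])
          have : (Fintype.equivFin V x : ℕ) = (Fintype.equivFin V y : ℕ) :=
            Nat.eq_of_mul_eq_mul_right (Nat.succ_pos n) hc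
          exact hxy ((Fintype.equivFin V).injective (Fin.val_injective this))
        · simp only at h1 h2 h3 h4
          subst h1; subst h2
          have hij : i ≠ j := fun h => hne' (by simp [h])
          dsimp only at hc
          rw [Nat.min_eq_left (le_of_lt h3), Nat.min_eq_left (le_of_lt h4)] at hc
          exact hij (Nat.add_left_cancel hc)
    refine le_csInf hne ?_
    rintro k ⟨c, hc1, hc2⟩
    have hinj : Function.Injective (fun i : Fin n => (⟨c (u, i), hc1 _⟩ : Fin k)) := by
      intro i j hij
      by_contra hne'
      have hedge : ((u, (i : ℕ)), (u, (j : ℕ))) ∈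
          canonE F ∪ {e : (V × ℕ) × (V × ℕ) | e.1.1 = u ∧ e.2.1 = u ∧ e.1.2 < n ∧ e.2.2 < n} :=
        Or.inr ⟨rfl, rfl, i.2, j.2⟩
      have hvne : ((u, (i : ℕ)) : V × ℕ) ≠ (u, (j : ℕ)) := by
        simp only [ne_eq, Prod.mk.injEq, not_and]
        intro _; exact fun h => hne' (Fin.val_injective h)
      exact hc2 _ hedge hvne (by simpa using congrArg Fin.val hij)
    simpa using Fintype.card_le_of_injective _ hinj

/-- The chromatic numbers of graphs in `G_F` are unbounded iff `F` has a marked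
self-loop; without marked self-loops the maximum is `χ(V_F, E_F)`. -/
theorem stmt17 {V : Type} [Fintype V] (F : MarkedGraph V) :
    ((∀ n : ℕ, ∃ (Vg : Set (V × ℕ)) (Eg : Set ((V × ℕ) × (V × ℕ))),
        MemGF F Vg Eg ∧ n ≤ chrom Eg) ↔ ∃ u : V, (u, u) ∈ F.markedE) ∧
    ((∀ u : V, (u, u) ∉ F.markedE) →
      IsGreatest {n | ∃ (Vg : Set (V × ℕ)) (Eg : Set ((V × ℕ) × (V × ℕ))),
        MemGF F Vg Eg ∧ chrom Eg = n} (chromF F)) := by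
  constructor
  · constructor
    · intro h
      by_contra hno
      push_neg at hno
      obtain ⟨Vg, Eg, hG, hle⟩ := h (chromF F + 1)
      have := chrom_le_chromF F hno hG
      omega
    · rintro ⟨u, hu⟩ n
      exact exists_big F hu n
  · intro hno
    constructor
    · exact ⟨canonV V, canonE F, memGF_canon F, chrom_canon_eq F hno⟩
    · rintro m ⟨Vg, Eg, hG, rfl⟩
      exact chrom_le_chromF F hno hG
end
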